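/- Let X be a median algebra satisfying: for every two distinct points x,y ∈ X there exist c,d ∈ [x,y] with c ≠ d, c ∈ [x,d], d ∈ [c,y], and [c,d] a chain (chain-solvability). Then X satisfies the median T₂ property: for every distinct x,y ∈ X there exists a nontrivial chain interval [u,v] such that {m(u,x,v), m(u,y,v)} = {u,v}. Conversely, the median T₂ property implies chain-solvability. -/

import Mathlib

/-- A median algebra: a set with a ternary operation `m` that is symmetric
(generated by the two transpositions), satisfies `m a b b = b`, and
`m (m a b d) c d = m (m a c d) b d`. -/
structure MedianAlgebra (X : Type*) where
  m : X → X → X → X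
  swap12 : ∀ a b c, m a b c = m b a c
  swap23 : ∀ a b c, m a b c = m a c b
  absorb : ∀ a b, m a b b = b
  med_assoc : ∀ a b c d, m (m a b d) c d = m (m a c d) b d

namespace MedianAlgebra

variable {X : Type*}

/-- The median interval `[a,b] = {c : m a c b = c}`. -/
def interval (M : MedianAlgebra X) (a b : X) : Set X := {c | M.m a c b = c}

/-- A subset is convex if it contains the interval between any two of its points. -/
def IsConvex (M : MedianAlgebra X) (C : Set X) : Prop :=
  ∀ x ∈ C, ∀ y ∈ C, M.interval x y ⊆ C

/-- The shadow `S^a_b = {w : m a w b = b}` (i.e. `b ∈ [a,w]`). -/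
def shadow (M : MedianAlgebra X) (a b : X) : Set X := {w | M.m a w b = b}

/-- The branch `B^a_b = {w : m a w b ≠ b}`, complement of the shadow. -/
def branch (M : MedianAlgebra X) (a b : X) : Set X := {w | M.m a w b ≠ b}

/-- The relation `x ≤_u y` iff `m u x y = x`. -/
def leI (M : MedianAlgebra X) (u x y : X) : Prop := M.m u x y = x

/-- `[u,v]` is a chain interval: `≤_u` is total on `[u,v]` and the
order-median induced by `≤_u` agrees with `m` on `[u,v]`. -/
def IsChainInterval (M : MedianAlgebra X) (u v : X) : Prop :=
  (∀ x ∈ M.interval u v, ∀ y ∈ M.interval u v, M.leI u x y ∨ M.leI u y x) ∧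
  (∀ x ∈ M.interval u v, ∀ y ∈ M.interval u v, ∀ z ∈ M.interval u v,
      M.leI u x y → M.leI u y z → M.m x y z = y)

end MedianAlgebra

open MedianAlgebra


/-!
For the converse, suppose `m(u,x,v) = u` and `m(u,y,v) = v` with `[u,v]` a chain, and let
`c = m(x,u,y)`, `d = m(x,v,y)` be the gates of `u` and `v` in `[x,y]`. The key fact is that a gate
map `z ↦ m(u,z,v)` preserves betweenness, hence is a median homomorphism. From this, `c` and `d`
lie in order on `[x,y]`, and the gates onto `[u,v]` and onto `[c,d]` restrict to mutually inverse
isomorphisms `[c,d] ≅ [u,v]` sending `c ↦ u`, `d ↦ v`; so `[c,d]` is a nontrivial chain.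
-/

namespace MedianAlgebra

variable {X : Type*} (M : MedianAlgebra X)

lemma m_rotate (a b c : X) : M.m a b c = M.m b c a :=
  (M.swap12 a b c).trans (M.swap23 b a c)

lemma m_swap13 (a b c : X) : M.m a b c = M.m c b a :=
  (M.swap12 a b c).trans ((M.swap23 b a c).trans (M.swap12 b c a))

lemma m_self_left (a b : X) : M.m a a b = a :=
  (M.m_rotate b a a).symm.trans (M.absorb b a)

lemma m_m_assoc (a b c p : X) : M.m (M.m a b p) c p = M.m a (M.m b c p) p := by
  rw [M.swap12 a b p, M.med_assoc b a c p, M.swap12 (M.m b c p) a p]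

variable {M}

lemma interval_comm (a b : X) : M.interval a b = M.interval b a := by
  ext c
  change M.m a c b = c ↔ M.m b c a = c
  rw [M.m_swap13]

lemma left_mem_interval (a b : X) : a ∈ M.interval a b := M.m_self_left a b

lemma right_mem_interval (a b : X) : b ∈ M.interval a b := M.absorb a b

lemma median_mem_interval (a b c : X) : M.m a b c ∈ M.interval a c := by
  change M.m a (M.m a b c) c = M.m a b c
  rw [M.swap12 a (M.m a b c) c, M.med_assoc a b a c, M.m_self_left a c]

lemma median_mem_interval_left (a b c : X) : M.m a b c ∈ M.interval a b := by
  have h := median_mem_interval (M := M) a c b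
  rwa [M.swap23 a c b] at h

lemma median_mem_interval_right (a b c : X) : M.m a b c ∈ M.interval b c := by
  have h := median_mem_interval (M := M) b a c
  rwa [M.swap12 b a c] at h

lemma eq_of_mem_interval_of_mem_interval {a b c : X} (hb : b ∈ M.interval a c)
    (hc : c ∈ M.interval a b) : b = c :=
  (hb : M.m a b c = b).symm.trans ((M.swap23 a b c).trans hc)

lemma mem_interval_trans {p a b c : X} (hab : a ∈ M.interval p b) (hbc : b ∈ M.interval p c) :
    a ∈ M.interval p c := by
  change M.m p a b = a at hab
  change M.m p b c = b at hbc
  calc M.m p a c = M.m p (M.m p a b) c := by rw [hab]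
    _ = a := by
      rw [M.m_rotate p (M.m p a b) c, M.m_rotate p a b, M.m_m_assoc a b c p,
        ← M.m_rotate p b c, hbc, ← M.m_rotate p a b, hab]

lemma mem_interval_median {p a b s : X} (ha : s ∈ M.interval p a) (hb : s ∈ M.interval p b) :
    s ∈ M.interval p (M.m p a b) := by
  change M.m p s a = s at ha
  change M.m p s b = s at hb
  change M.m p s (M.m p a b) = s
  rw [M.m_swap13, M.m_rotate p a b, M.m_m_assoc, M.m_swap13 b s p, hb, M.m_swap13 a s p, ha]

lemma median_eq_of_mem {a b c z : X} (h1 : z ∈ M.interval a b) (h2 : z ∈ M.interval b c)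
    (h3 : z ∈ M.interval a c) : M.m a b c = z := by
  change M.m a z b = z at h1
  change M.m b z c = z at h2
  change M.m a z c = z at h3
  set t := M.m a b c with ht
  have s1 : M.m a z t = z := by
    rw [ht, M.m_swap13 a z (M.m a b c), M.m_rotate a b c, M.med_assoc b c z a,
      M.m_swap13 b z a, h1, ← M.m_rotate a z c, h3]
  have s2 : M.m t z b = z := by
    rw [ht, M.swap23 a b c, M.med_assoc a c z b, h1, ← M.m_rotate b z c, h2]
  have s3 : M.m a b t = t := (M.swap23 a b t).trans (median_mem_interval_left a b c)
  have key : M.m z (M.m a b t) t = z := by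
    rw [M.swap12 z (M.m a b t) t, M.med_assoc a b z t, s1, ← M.m_rotate t z b, s2]
  rwa [s3, M.absorb z t] at key

lemma gate_mem_interval {p q t : X} (z : X) (ht : t ∈ M.interval p q) :
    M.m p z q ∈ M.interval z t := by
  change M.m p t q = t at ht
  change M.m z (M.m p z q) t = M.m p z q
  set g := M.m p z q
  have hg : M.m p g z = g := median_mem_interval_left p z q
  have hpt : M.m p t z = M.m t g p := by
    conv_lhs => rw [← ht]
    rw [M.m_rotate p (M.m p t q) z, M.m_rotate p t q, M.m_m_assoc t q z p, M.m_swap13 q z p]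
  calc M.m z g t
      = M.m g t z := M.m_rotate z g t
    _ = M.m (M.m g p z) t z := by rw [M.swap12 g p z, hg]
    _ = M.m g (M.m t g p) z := by rw [M.m_m_assoc, hpt]
    _ = M.m t (M.m p z g) g := by
        rw [M.m_rotate g (M.m t g p) z, M.swap23 t g p, M.m_m_assoc]
    _ = g := by rw [← M.swap23 p g z, hg, M.absorb]

lemma isConvex_interval (a b : X) : M.IsConvex (M.interval a b) := by
  intro c hc d hd z hz
  change M.m a z b = z
  have g1 : M.m z (M.m a z b) c = M.m a z b := gate_mem_interval z hc
  have g2 : M.m z (M.m a z b) d = M.m a z b := gate_mem_interval z hd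
  have h : M.m (M.m a z b) (M.m c d z) z = z := by
    rw [← M.swap23 c z d, hz, M.absorb]
  rw [← M.m_m_assoc, ← M.m_rotate z (M.m a z b) c, g1, ← M.m_rotate z (M.m a z b) d, g2] at h
  exact h

lemma median_eq_of_leI_of_leI {c z₁ z₂ z₃ : X} (h₁₂ : M.leI c z₁ z₂) (h₂₃ : M.leI c z₂ z₃) :
    M.m z₁ z₂ z₃ = z₂ := by
  set t := M.m z₁ z₂ z₃
  have h₁₃ : z₁ ∈ M.interval c z₃ := mem_interval_trans h₁₂ h₂₃
  have htc₂ : t ∈ M.interval c z₂ :=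
    isConvex_interval c z₂ z₁ h₁₂ z₂ (right_mem_interval c z₂) (median_mem_interval_left z₁ z₂ z₃)
  have htc₃ : t ∈ M.interval c z₃ :=
    isConvex_interval c z₃ z₁ h₁₃ z₃ (right_mem_interval c z₃) (median_mem_interval z₁ z₂ z₃)
  have key : M.m c z₂ z₃ = t := median_eq_of_mem htc₂ (median_mem_interval_right z₁ z₂ z₃) htc₃
  exact (h₂₃ ▸ key).symm

lemma isChainInterval_of_total {u v : X}
    (h : ∀ x ∈ M.interval u v, ∀ y ∈ M.interval u v, M.leI u x y ∨ M.leI u y x) :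
    M.IsChainInterval u v :=
  ⟨h, fun _ _ _ _ _ _ => median_eq_of_leI_of_leI⟩

lemma IsChainInterval.symm {u v : X} (h : M.IsChainInterval u v) : M.IsChainInterval v u := by
  have reverse : ∀ a ∈ M.interval u v, ∀ b ∈ M.interval u v, M.leI u a b → M.leI v b a :=
    fun a _ b hb hab => (M.m_swap13 v b a).trans (median_eq_of_leI_of_leI hab hb)
  refine isChainInterval_of_total fun a ha b hb => ?_
  rw [interval_comm] at ha hb
  rcases h.1 a ha b hb with hab | hba
  · exact Or.inr (reverse a ha b hb hab)
  · exact Or.inl (reverse b hb a ha hba)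

lemma gate_mem_interval_gate (u v : X) {a b t : X} (ht : t ∈ M.interval a b) :
    M.m u t v ∈ M.interval (M.m u a v) (M.m u b v) := by
  set a' := M.m u a v
  set b' := M.m u b v
  set t' := M.m u t v
  set s := M.m a' t' b'
  have hs : s ∈ M.interval u v :=
    isConvex_interval u v a' (median_mem_interval u a v) b' (median_mem_interval u b v)
      (median_mem_interval a' t' b')
  have hsa : s ∈ M.interval t' a := by
    have ha' : a' ∈ M.interval t' a := by
      rw [interval_comm]; exact gate_mem_interval a (median_mem_interval u t v)
    refine mem_interval_trans ?_ ha'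
    rw [interval_comm]; exact median_mem_interval_left a' t' b'
  have hsb : s ∈ M.interval t' b := by
    have hb' : b' ∈ M.interval t' b := by
      rw [interval_comm]; exact gate_mem_interval b (median_mem_interval u t v)
    exact mem_interval_trans (median_mem_interval_right a' t' b') hb'
  have hst : s ∈ M.interval t t' := by
    have hg : M.m t' a b ∈ M.interval t' t := by
      rw [M.swap12]; exact gate_mem_interval t' ht
    rw [interval_comm]
    exact mem_interval_trans (mem_interval_median hsa hsb) hg
  have hts : t' ∈ M.interval t s := gate_mem_interval t hs
  rw [← eq_of_mem_interval_of_mem_interval hst hts]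
  exact median_mem_interval a' t' b'

lemma gate_median (u v a b c : X) :
    M.m u (M.m a b c) v = M.m (M.m u a v) (M.m u b v) (M.m u c v) :=
  (median_eq_of_mem (gate_mem_interval_gate u v (median_mem_interval_left a b c))
    (gate_mem_interval_gate u v (median_mem_interval_right a b c))
    (gate_mem_interval_gate u v (median_mem_interval a b c))).symm

lemma gate_gate_of_mem {u v c d z : X} (hc : c ∈ M.interval u d) (hd : d ∈ M.interval c v)
    (hz : z ∈ M.interval c d) : M.m c (M.m u z v) d = z := by
  change M.m u c d = c at hc
  change M.m c d v = d at hd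
  change M.m c z d = z at hz
  rw [gate_median, M.swap12 c u d, hc, M.swap23 c v d, hd, hz, hz]

lemma leI_of_leI_gate {u v c d z w : X} (hc : c ∈ M.interval u d) (hd : d ∈ M.interval c v)
    (hcu : M.m u c v = u) (hz : z ∈ M.interval c d) (hw : w ∈ M.interval c d)
    (h : M.leI u (M.m u z v) (M.m u w v)) : M.leI c z w := by
  set t := M.m c z w
  have ht : t ∈ M.interval c d :=
    isConvex_interval c d c (left_mem_interval c d) w hw (median_mem_interval c z w)
  have hgate : M.m u t v = M.m u z v := by rw [gate_median, hcu]; exact h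
  calc t = M.m c (M.m u t v) d := (gate_gate_of_mem hc hd ht).symm
    _ = z := by rw [hgate]; exact gate_gate_of_mem hc hd hz

lemma exists_chain_subinterval_of_gate_eq {u v x y : X} (huv : u ≠ v)
    (hchain : M.IsChainInterval u v) (hx : M.m u x v = u) (hy : M.m u y v = v) :
    ∃ c d : X, c ∈ M.interval x y ∧ d ∈ M.interval x y ∧ c ≠ d ∧
      c ∈ M.interval x d ∧ d ∈ M.interval c y ∧ M.IsChainInterval c d := by
  set c := M.m x u y
  set d := M.m x v y
  have hcu : M.m u c v = u := by rw [gate_median, hx, hy, M.m_self_left, M.m_self_left]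
  have hdv : M.m u d v = v := by rw [gate_median, hx, hy, M.absorb, M.absorb]
  have hcd : c ≠ d := fun h => huv (hcu.symm.trans ((congrArg (M.m u · v) h).trans hdv))
  have hc : c ∈ M.interval u d := gate_mem_interval u (median_mem_interval x v y)
  have hd : d ∈ M.interval c v :=
    (M.m_swap13 c d v).trans (gate_mem_interval v (median_mem_interval x u y))
  refine ⟨c, d, median_mem_interval x u y, median_mem_interval x v y, hcd, ?_, ?_, ?_⟩
  · have h := gate_median (M := M) x y x u v
    rw [M.swap12 x u v, hx, M.m_self_left] at h
    exact h.symm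
  · have h := gate_median (M := M) x y u v y
    rw [M.swap23 u v y, hy, M.absorb x y] at h
    exact h.symm
  · refine isChainInterval_of_total fun z hz w hw => ?_
    rcases hchain.1 _ (median_mem_interval u z v) _ (median_mem_interval u w v) with h | h
    · exact Or.inl (leI_of_leI_gate hc hd hcu hz hw h)
    · exact Or.inr (leI_of_leI_gate hc hd hcu hw hz h)

end MedianAlgebra

/-- Chain-solvability is equivalent to the median T₂ property. -/
theorem chainSolvable_iff_medT2 {X : Type*} (M : MedianAlgebra X) :
    (∀ x y : X, x ≠ y → ∃ c d : X,
        c ∈ M.interval x y ∧ d ∈ M.interval x y ∧ c ≠ d ∧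
        c ∈ M.interval x d ∧ d ∈ M.interval c y ∧ M.IsChainInterval c d)
    ↔
    (∀ x y : X, x ≠ y → ∃ u v : X, u ≠ v ∧ M.IsChainInterval u v ∧
        ({M.m u x v, M.m u y v} : Set X) = {u, v}) := by
  constructor
  · intro H x y hxy
    obtain ⟨c, d, -, -, hcd, hc, hd, hchain⟩ := H x y hxy
    refine ⟨c, d, hcd, hchain, ?_⟩
    rw [M.swap12 c x d, hc, M.swap23 c y d, hd]
  · intro H x y hxy
    obtain ⟨u, v, huv, hchain, hgates⟩ := H x y hxy
    rcases Set.pair_eq_pair_iff.mp hgates with ⟨hx, hy⟩ | ⟨hx, hy⟩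
    · exact exists_chain_subinterval_of_gate_eq huv hchain hx hy
    · exact exists_chain_subinterval_of_gate_eq huv.symm hchain.symm
        ((M.m_swap13 v x u).trans hx) ((M.m_swap13 v y u).trans hy)
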